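/- Deterministic bound on the sign pairing. Let φ∈Ψ. Then for every integer s with k₀−1 ≤ s ≤ m−1 and every T∈𝒮_V, |⟨sign(S_*), T⟩| ≤ √(φ(s))·‖T‖₂ + √((c+2)·φ(s+1)/λ_{s+1})·‖W^{1/2}T‖₂. -/

import Mathlib

open Matrix
open scoped BigOperators

noncomputable section

variable {m : ℕ}

/-- Hilbert–Schmidt inner product of matrices -/
def hsInner (A B : Matrix (Fin m) (Fin m) ℝ) : ℝ := ∑ i, ∑ j, A i j * B i j

/-- Hilbert–Schmidt (Frobenius) norm -/
def hsNorm (A : Matrix (Fin m) (Fin m) ℝ) : ℝ := Real.sqrt (hsInner A A)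

/-- squared norm of the orthogonal projection of `x` onto `L` -/
def projNormSq (L : Submodule ℝ (EuclideanSpace ℝ (Fin m)))
    (x : EuclideanSpace ℝ (Fin m)) : ℝ :=
  ‖(L.orthogonalProjectionOnto x : EuclideanSpace ℝ (Fin m))‖ ^ 2

/-- the rank-one matrix `x ⊗ x` -/
def outerSelf (x : EuclideanSpace ℝ (Fin m)) : Matrix (Fin m) (Fin m) ℝ :=
  Matrix.vecMulVec (WithLp.equiv 2 (Fin m → ℝ) x) (WithLp.equiv 2 (Fin m → ℝ) x)

/-- `sign(S) = ∑_j sign(σ_j) ψ_j ⊗ ψ_j` for a symmetric matrix `S` with spectral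
decomposition `S = ∑_j σ_j ψ_j ⊗ ψ_j` -/
def signMatrix {A : Matrix (Fin m) (Fin m) ℝ} (hA : A.IsHermitian) :
    Matrix (Fin m) (Fin m) ℝ :=
  ∑ i, Real.sign (hA.eigenvalues i) • outerSelf (hA.eigenvectorBasis i)

/-- support of a symmetric matrix: the span of the eigenvectors with nonzero eigenvalues,
i.e. the range of the associated linear map -/
def suppS (A : Matrix (Fin m) (Fin m) ℝ) : Submodule ℝ (EuclideanSpace ℝ (Fin m)) :=
  LinearMap.range (Matrix.toEuclideanLin A)

/-- The positive semidefinite square root of a positive semidefinite matrix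
(the definition Mathlib had as `Matrix.PosSemidef.sqrt`, since removed) -/
def Matrix.PosSemidef.sqrt {A : Matrix (Fin m) (Fin m) ℝ} (hA : A.PosSemidef) :
    Matrix (Fin m) (Fin m) ℝ :=
  hA.1.eigenvectorUnitary.1 * diagonal ((↑) ∘ Real.sqrt ∘ hA.1.eigenvalues) *
    (star hA.1.eigenvectorUnitary : Matrix (Fin m) (Fin m) ℝ)

/-!
Expand `⟨sign S_*, T⟩ = ∑ⱼ ⟪sign(S_*) φⱼ, T φⱼ⟫` in the eigenbasis of `W` and split the sum at `s`.
Since `‖sign(S_*) x‖ = ‖P_L x‖`, Cauchy–Schwarz bounds the head by `√φ(s) ‖T‖₂`. On the tail,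
Cauchy–Schwarz weighted by `λⱼ` gives `‖W^{1/2} T‖₂ · (∑_{j>s} ‖P_L φⱼ‖² / λⱼ)^{1/2}`, and Abel
summation, fed with `∑_{s<j≤k} ‖P_L φⱼ‖² ≤ φ(k) ≤ k φ(s+1)/(s+1)` and
`∑_{k>s} 1/λ_k ≤ c (s+1)/λ_{s+1}`, bounds the last sum by `(c+1) φ(s+1)/λ_{s+1}`.
-/

open scoped RealInnerProductSpace
open Finset

theorem sum_Icc_mul_nonneg_of_forall_sum_Icc_nonneg {w d : ℕ → ℝ} {a n : ℕ}
    (hw : AntitoneOn w (Set.Icc a n)) (hwn : 0 ≤ w n)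
    (hd : ∀ k ∈ Icc a n, 0 ≤ ∑ j ∈ Icc a k, d j) :
    0 ≤ ∑ j ∈ Icc a n, w j * d j := by
  rcases lt_or_ge n a with hna | han
  · simp [Icc_eq_empty_of_lt hna]
  induction n, han using Nat.le_induction generalizing w with
  | base => simpa using mul_nonneg hwn (hd a (by simp))
  | succ n han ih =>
    -- Abel summation: peel off the last weight `w (n + 1)` from every term.
    have hsplit : ∑ j ∈ Icc a (n + 1), w j * d j =
        ∑ j ∈ Icc a n, (w j - w (n + 1)) * d j + w (n + 1) * ∑ j ∈ Icc a (n + 1), d j := by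
      rw [sum_Icc_succ_top (by omega), sum_Icc_succ_top (by omega), mul_add, mul_sum]
      simp only [sub_mul, sum_sub_distrib]
      ring
    have hw' : AntitoneOn (fun j => w j - w (n + 1)) (Set.Icc a n) := fun i hi j hj hij =>
      sub_le_sub_right (hw (Set.Icc_subset_Icc_right n.le_succ hi)
        (Set.Icc_subset_Icc_right n.le_succ hj) hij) _
    have hwn' : 0 ≤ w n - w (n + 1) :=
      sub_nonneg.2 (hw ⟨han, n.le_succ⟩ ⟨by omega, le_rfl⟩ n.le_succ)
    rw [hsplit]
    exact add_nonneg (ih hw' hwn' fun k hk => hd k (Icc_subset_Icc_right n.le_succ hk))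
      (mul_nonneg hwn (hd (n + 1) (by simp; omega)))

theorem sum_Icc_inv_mul_le {lam p f : ℕ → ℝ} {a n : ℕ} {C : ℝ} (ha : 1 ≤ a) (han : a ≤ n)
    (hlam_pos : 0 < lam a) (hlam : MonotoneOn lam (Set.Icc a n))
    (hsum : ∑ k ∈ Icc a n, (lam k)⁻¹ ≤ C * a / lam a)
    (hf_nonneg : 0 ≤ f a) (hf : AntitoneOn (fun k : ℕ => f k / k) (Set.Icc a n))
    (hp : ∀ k ∈ Icc a n, ∑ j ∈ Icc a k, p j ≤ f k) :
    ∑ k ∈ Icc a n, (lam k)⁻¹ * p k ≤ (C + 1) * f a / lam a := by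
  set q := f a / a
  have hq : 0 ≤ q := by positivity
  -- `u` has partial sums `q * k`, which dominate those of `p`.
  set u : ℕ → ℝ := fun j => if j = a then q * a else q
  have hu_Ioc : ∀ k, ∀ j ∈ Ioc a k, u j = q := fun k j hj => if_neg (mem_Ioc.1 hj).1.ne'
  have hu : ∀ k, a ≤ k → ∑ j ∈ Icc a k, u j = q * k := by
    intro k hak
    rw [← add_sum_Ioc_eq_sum_Icc hak, sum_congr rfl (hu_Ioc k), sum_const, Nat.card_Ioc,
      nsmul_eq_mul, Nat.cast_sub hak, show u a = q * a from if_pos rfl]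
    ring
  have hpu : ∀ k ∈ Icc a n, 0 ≤ ∑ j ∈ Icc a k, (u j - p j) := by
    intro k hk
    obtain ⟨hak, hkn⟩ := mem_Icc.1 hk
    have hk0 : (0 : ℝ) < k := by norm_cast; omega
    have hfk : f k ≤ q * k :=
      (div_le_iff₀ hk0).1 (hf ⟨le_rfl, han⟩ ⟨hak, hkn⟩ hak)
    rw [sum_sub_distrib, hu k hak]
    linarith [hp k hk]
  have hw : AntitoneOn (fun k => (lam k)⁻¹) (Set.Icc a n) := fun i hi j hj hij =>
    inv_anti₀ (hlam_pos.trans_le (hlam ⟨le_rfl, han⟩ hi hi.1)) (hlam hi hj hij)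
  have hwn : 0 ≤ (lam n)⁻¹ :=
    inv_nonneg.2 (hlam_pos.le.trans (hlam ⟨le_rfl, han⟩ ⟨han, le_rfl⟩ han))
  have hmaj := sum_Icc_mul_nonneg_of_forall_sum_Icc_nonneg hw hwn hpu
  simp only [mul_sub, sum_sub_distrib, sub_nonneg] at hmaj
  have hwu : ∑ k ∈ Icc a n, (lam k)⁻¹ * u k ≤ q * a / lam a + q * ∑ k ∈ Icc a n, (lam k)⁻¹ := by
    rw [← add_sum_Ioc_eq_sum_Icc han, ← add_sum_Ioc_eq_sum_Icc han,
      show u a = q * a from if_pos rfl, sum_congr rfl fun j hj => congrArg _ (hu_Ioc n j hj),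
      ← sum_mul, mul_add]
    have : 0 ≤ q * (lam a)⁻¹ := by positivity
    rw [div_eq_mul_inv]
    linarith
  calc ∑ k ∈ Icc a n, (lam k)⁻¹ * p k
      ≤ q * a / lam a + q * (C * a / lam a) :=
        hmaj.trans (hwu.trans (by gcongr))
    _ = (C + 1) * f a / lam a := by
        have : (a : ℝ) ≠ 0 := by norm_cast; omega
        simp only [q]
        field_simp
        ring

theorem abs_sum_inner_le_sqrt_mul_sqrt {ι E : Type*} [NormedAddCommGroup E]
    [InnerProductSpace ℝ E] (t : Finset ι) (x y : ι → E) {w : ι → ℝ} (hw : ∀ i ∈ t, 0 < w i) :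
    |∑ i ∈ t, ⟪x i, y i⟫| ≤
      √(∑ i ∈ t, ‖x i‖ ^ 2 / w i) * √(∑ i ∈ t, w i * ‖y i‖ ^ 2) := by
  calc |∑ i ∈ t, ⟪x i, y i⟫| ≤ ∑ i ∈ t, ‖x i‖ * ‖y i‖ :=
        (abs_sum_le_sum_abs _ _).trans (sum_le_sum fun i _ => abs_real_inner_le_norm _ _)
    _ = ∑ i ∈ t, ‖x i‖ / √(w i) * (√(w i) * ‖y i‖) := by
        refine sum_congr rfl fun i hi => ?_
        have := Real.sqrt_pos.2 (hw i hi)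
        field_simp
    _ ≤ √(∑ i ∈ t, (‖x i‖ / √(w i)) ^ 2) * √(∑ i ∈ t, (√(w i) * ‖y i‖) ^ 2) :=
        Real.sum_mul_le_sqrt_mul_sqrt _ _ _
    _ = √(∑ i ∈ t, ‖x i‖ ^ 2 / w i) * √(∑ i ∈ t, w i * ‖y i‖ ^ 2) := by
        congr 2 <;> refine sum_congr rfl fun i hi => ?_
        · rw [div_pow, Real.sq_sqrt (hw i hi).le]
        · rw [mul_pow, Real.sq_sqrt (hw i hi).le]

theorem hsInner_eq_trace (A B : Matrix (Fin m) (Fin m) ℝ) : hsInner A B = (Aᵀ * B).trace := by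
  simp only [hsInner, Matrix.trace, Matrix.diag_apply, Matrix.mul_apply, Matrix.transpose_apply]
  exact sum_comm

theorem trace_toEuclideanLin (A : Matrix (Fin m) (Fin m) ℝ) :
    LinearMap.trace ℝ _ (toEuclideanLin A) = A.trace := by
  rw [toEuclideanLin_eq_toLin_orthonormal, LinearMap.trace_eq_matrix_trace ℝ
    (EuclideanSpace.basisFun (Fin m) ℝ).toBasis, LinearMap.toMatrix_toLin]

theorem toEuclideanLin_mul_apply (A B : Matrix (Fin m) (Fin m) ℝ) (x : EuclideanSpace ℝ (Fin m)) :
    toEuclideanLin (A * B) x = toEuclideanLin A (toEuclideanLin B x) := by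
  simp

theorem inner_toEuclideanLin_left (A : Matrix (Fin m) (Fin m) ℝ) (x y : EuclideanSpace ℝ (Fin m)) :
    ⟪toEuclideanLin A x, y⟫ = ⟪x, toEuclideanLin Aᵀ y⟫ := by
  rw [← Matrix.conjTranspose_eq_transpose_of_trivial,
    toEuclideanLin_conjTranspose_eq_adjoint, LinearMap.adjoint_inner_right]

theorem sum_inner_toEuclideanLin_eq_hsInner {ι : Type*} [Fintype ι]
    (b : OrthonormalBasis ι ℝ (EuclideanSpace ℝ (Fin m))) (A B : Matrix (Fin m) (Fin m) ℝ) :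
    ∑ i, ⟪toEuclideanLin A (b i), toEuclideanLin B (b i)⟫ = hsInner A B := by
  rw [hsInner_eq_trace, ← trace_toEuclideanLin, LinearMap.trace_eq_sum_inner _ b]
  simp_rw [inner_toEuclideanLin_left, toEuclideanLin_mul_apply]

theorem Matrix.PosSemidef.sqrt_eq_cfc {A : Matrix (Fin m) (Fin m) ℝ} (hA : A.PosSemidef) :
    hA.sqrt = cfc Real.sqrt A := by
  rw [hA.1.cfc_eq]
  rfl

theorem Matrix.PosSemidef.sqrt_mul_sqrt {A : Matrix (Fin m) (Fin m) ℝ} (hA : A.PosSemidef) :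
    hA.sqrt * hA.sqrt = A := by
  rw [hA.sqrt_eq_cfc, ← cfc_mul Real.sqrt Real.sqrt A]
  conv_rhs => rw [← cfc_id' ℝ A hA.1.isSelfAdjoint]
  refine cfc_congr fun x hx => Real.mul_self_sqrt ?_
  obtain ⟨i, rfl⟩ := hA.1.spectrum_real_eq_range_eigenvalues ▸ hx
  exact hA.eigenvalues_nonneg i

theorem Matrix.PosSemidef.transpose_sqrt {A : Matrix (Fin m) (Fin m) ℝ} (hA : A.PosSemidef) :
    hA.sqrtᵀ = hA.sqrt := by
  rw [hA.sqrt_eq_cfc, ← Matrix.conjTranspose_eq_transpose_of_trivial]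
  exact cfc_predicate Real.sqrt A

theorem hsInner_sqrt_mul_eq_hsInner_mul {W T : Matrix (Fin m) (Fin m) ℝ} (hW : W.PosSemidef)
    (hT : Tᵀ = T) : hsInner (hW.sqrt * T) (hW.sqrt * T) = hsInner T (T * W) := by
  rw [hsInner_eq_trace, hsInner_eq_trace, Matrix.transpose_mul, hW.transpose_sqrt, hT,
    Matrix.mul_assoc, ← Matrix.mul_assoc hW.sqrt, hW.sqrt_mul_sqrt, Matrix.trace_mul_comm,
    Matrix.mul_assoc, Matrix.trace_mul_comm W, Matrix.mul_assoc]

section SignMatrix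

theorem toEuclideanLin_outerSelf_apply (x y : EuclideanSpace ℝ (Fin m)) :
    toEuclideanLin (outerSelf x) y = ⟪x, y⟫ • x := by
  ext i
  simp [outerSelf, Matrix.mulVec, dotProduct, Matrix.vecMulVec_apply, PiLp.inner_apply,
    mul_sum, mul_assoc, mul_comm]

variable {A : Matrix (Fin m) (Fin m) ℝ} (hA : A.IsHermitian)

theorem inner_eigenvectorBasis_signMatrix (i : Fin m) (x : EuclideanSpace ℝ (Fin m)) :
    ⟪hA.eigenvectorBasis i, toEuclideanLin (signMatrix hA) x⟫ =
      Real.sign (hA.eigenvalues i) * ⟪hA.eigenvectorBasis i, x⟫ := by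
  simp only [signMatrix, map_sum, LinearMap.sum_apply, map_smul, LinearMap.smul_apply,
    toEuclideanLin_outerSelf_apply, smul_smul]
  exact hA.eigenvectorBasis.orthonormal.inner_right_fintype _ i

theorem toEuclideanLin_eigenvectorBasis (i : Fin m) :
    toEuclideanLin A (hA.eigenvectorBasis i) = hA.eigenvalues i • hA.eigenvectorBasis i :=
  congrArg (WithLp.toLp 2) (hA.mulVec_eigenvectorBasis i)

theorem starProjection_suppS_eigenvectorBasis (i : Fin m) :
    (suppS A).starProjection (hA.eigenvectorBasis i) =
      if hA.eigenvalues i = 0 then 0 else hA.eigenvectorBasis i := by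
  split_ifs with h
  · rw [Submodule.starProjection_apply_eq_zero_iff]
    rintro _ ⟨z, rfl⟩
    rw [real_inner_comm, ← Matrix.isSymmetric_toEuclideanLin_iff.mpr hA,
      toEuclideanLin_eigenvectorBasis, h, zero_smul, inner_zero_left]
  · rw [Submodule.starProjection_eq_self_iff]
    refine ⟨(hA.eigenvalues i)⁻¹ • hA.eigenvectorBasis i, ?_⟩
    rw [map_smul, toEuclideanLin_eigenvectorBasis, smul_smul, inv_mul_cancel₀ h, one_smul]

theorem sq_norm_toEuclideanLin_signMatrix (x : EuclideanSpace ℝ (Fin m)) :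
    ‖toEuclideanLin (signMatrix hA) x‖ ^ 2 = projNormSq (suppS A) x := by
  rw [projNormSq, Submodule.coe_orthogonalProjectionOnto_apply,
    ← hA.eigenvectorBasis.sum_sq_inner_right, ← hA.eigenvectorBasis.sum_sq_inner_right]
  refine sum_congr rfl fun i _ => ?_
  rw [inner_eigenvectorBasis_signMatrix, ← Submodule.inner_starProjection_left_eq_right,
    starProjection_suppS_eigenvectorBasis]
  rcases eq_or_ne (hA.eigenvalues i) 0 with h | h
  · simp [h]
  · rcases Real.sign_apply_eq_of_ne_zero _ h with hs | hs <;> simp [h, hs]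

end SignMatrix

theorem sum_fin_add_one_eq_sum_Icc {M : Type*} [AddCommMonoid M] (g : ℕ → M) (n : ℕ) :
    ∑ i : Fin n, g (i + 1) = ∑ j ∈ Icc 1 n, g j := by
  rw [Fin.sum_univ_eq_sum_range (fun i => g (i + 1)), range_eq_Ico, sum_Ico_add',
    Ico_add_one_right_eq_Icc]

section OrthonormalFamily

variable {phi : ℕ → EuclideanSpace ℝ (Fin m)}
  (horth : Orthonormal ℝ (fun k : Fin m => phi (k + 1)))
include horth

theorem hsInner_eq_sum_Icc (A B : Matrix (Fin m) (Fin m) ℝ) :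
    hsInner A B = ∑ j ∈ Icc 1 m, ⟪toEuclideanLin A (phi j), toEuclideanLin B (phi j)⟫ := by
  have hspan : ⊤ ≤ Submodule.span ℝ (Set.range fun k : Fin m => phi (k + 1)) :=
    (horth.linearIndependent.span_eq_top_of_card_eq_finrank' (by simp)).ge
  rw [← sum_inner_toEuclideanLin_eq_hsInner (OrthonormalBasis.mk horth hspan),
    ← sum_fin_add_one_eq_sum_Icc]
  simp

theorem sum_sq_norm_toEuclideanLin_le_hsInner {t : Finset ℕ} (ht : t ⊆ Icc 1 m)
    (A : Matrix (Fin m) (Fin m) ℝ) :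
    ∑ j ∈ t, ‖toEuclideanLin A (phi j)‖ ^ 2 ≤ hsInner A A := by
  rw [hsInner_eq_sum_Icc horth]
  simp_rw [real_inner_self_eq_norm_sq]
  exact sum_le_sum_of_subset_of_nonneg ht fun _ _ _ => sq_nonneg _

theorem sum_mul_sq_norm_toEuclideanLin_eq_hsInner_sqrt {lam : ℕ → ℝ} {W T : Matrix (Fin m) (Fin m) ℝ}
    (hW : W.PosSemidef)
    (hWeig : ∀ k, 1 ≤ k → k ≤ m → toEuclideanLin W (phi k) = lam k • phi k)
    (hT : T.IsHermitian) :
    ∑ j ∈ Icc 1 m, lam j * ‖toEuclideanLin T (phi j)‖ ^ 2 =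
      hsInner (hW.sqrt * T) (hW.sqrt * T) := by
  rw [hsInner_sqrt_mul_eq_hsInner_mul hW ((T.conjTranspose_eq_transpose_of_trivial).symm.trans hT),
    hsInner_eq_sum_Icc horth]
  refine sum_congr rfl fun j hj => ?_
  obtain ⟨h1j, hjm⟩ := mem_Icc.1 hj
  rw [toEuclideanLin_mul_apply, hWeig j h1j hjm, map_smul, real_inner_smul_right,
    real_inner_self_eq_norm_sq]

theorem abs_hsInner_le_sqrt_mul_sqrt_add_sqrt_mul_sqrt (A T : Matrix (Fin m) (Fin m) ℝ) {s : ℕ}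
    (hs : s ≤ m) {w : ℕ → ℝ} (hw : ∀ j ∈ Icc (s + 1) m, 0 < w j) :
    |hsInner A T| ≤
      √(∑ j ∈ Icc 1 s, ‖toEuclideanLin A (phi j)‖ ^ 2) *
          √(∑ j ∈ Icc 1 s, ‖toEuclideanLin T (phi j)‖ ^ 2) +
        √(∑ j ∈ Icc (s + 1) m, ‖toEuclideanLin A (phi j)‖ ^ 2 / w j) *
          √(∑ j ∈ Icc (s + 1) m, w j * ‖toEuclideanLin T (phi j)‖ ^ 2) := by
  have hIcc (n : ℕ) : Icc 1 n = Ioc 0 n := Icc_add_one_left_eq_Ioc 0 n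
  rw [Icc_add_one_left_eq_Ioc] at hw ⊢
  rw [hsInner_eq_sum_Icc horth, hIcc, hIcc, ← sum_Ioc_consecutive _ s.zero_le hs]
  refine (abs_add_le _ _).trans (add_le_add ?_ (abs_sum_inner_le_sqrt_mul_sqrt _ _ _ hw))
  simpa using abs_sum_inner_le_sqrt_mul_sqrt (Ioc 0 s)
    (fun j => toEuclideanLin A (phi j)) (fun j => toEuclideanLin T (phi j))
    (w := fun _ => 1) (by simp)

end OrthonormalFamily

theorem sign_pairing_bound_general
    (m : ℕ) (c : ℝ)
    (lam : ℕ → ℝ) (k0 : ℕ)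
    (hlam_nonneg : ∀ k, 1 ≤ k → k ≤ m → 0 ≤ lam k)
    (hlam_mono : ∀ k, 1 ≤ k → k < m → lam k ≤ lam (k + 1))
    (hk0_mem : 1 ≤ k0 ∧ k0 ≤ m) (hk0_pos : 0 < lam k0)
    (hsum : ∀ s, k0 ≤ s → s ≤ m → ∑ k ∈ Finset.Icc s m, (lam k)⁻¹ ≤ c * s / lam s)
    (phi : ℕ → EuclideanSpace ℝ (Fin m))
    (horth : Orthonormal ℝ (fun k : Fin m => phi ((k : ℕ) + 1)))
    (W : Matrix (Fin m) (Fin m) ℝ) (hW : W.PosSemidef)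
    (hWeig : ∀ k, 1 ≤ k → k ≤ m → Matrix.toEuclideanLin W (phi k) = lam k • phi k)
    (Sstar : Matrix (Fin m) (Fin m) ℝ) (hSsym : Sstar.IsHermitian)
    (f : ℕ → ℝ)
    (hf_ratio : ∀ k, 1 ≤ k → k < m → f (k + 1) / ((k : ℝ) + 1) ≤ f k / k)
    (hf_dom : ∀ k, k ≤ m → ∑ j ∈ Finset.Icc 1 k, projNormSq (suppS Sstar) (phi j) ≤ f k)
    (s : ℕ) (hs_lb : k0 ≤ s + 1) (hs_ub : s + 1 ≤ m)
    (T : Matrix (Fin m) (Fin m) ℝ) (hT : T.IsHermitian) :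
    |hsInner (signMatrix hSsym) T| ≤
      Real.sqrt (f s) * hsNorm T +
        Real.sqrt ((c + 2) * f (s + 1) / lam (s + 1)) * hsNorm (hW.sqrt * T) := by
  have hlam : MonotoneOn lam (Set.Icc 1 m) :=
    monotoneOn_of_le_add_one Set.ordConnected_Icc fun k _ hk hk1 => hlam_mono k hk.1 hk1.2
  have hlam_tail : MonotoneOn lam (Set.Icc (s + 1) m) :=
    hlam.mono (Set.Icc_subset_Icc_left (by omega))
  have hlam_s : 0 < lam (s + 1) := hk0_pos.trans_le (hlam hk0_mem ⟨by omega, hs_ub⟩ hs_lb)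
  have hf : AntitoneOn (fun k : ℕ => f k / k) (Set.Icc 1 m) :=
    antitoneOn_of_add_one_le Set.ordConnected_Icc fun k _ hk hk1 => by
      simpa using hf_ratio k hk.1 hk1.2
  have hP : ∀ j, 0 ≤ projNormSq (suppS Sstar) (phi j) := fun j => sq_nonneg _
  have hf_nonneg : 0 ≤ f (s + 1) := (sum_nonneg fun j _ => hP j).trans (hf_dom _ hs_ub)
  have htail : ∑ j ∈ Icc (s + 1) m, projNormSq (suppS Sstar) (phi j) / lam j ≤
      (c + 2) * f (s + 1) / lam (s + 1) := by
    simp_rw [div_eq_inv_mul (projNormSq _ _)]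
    refine (sum_Icc_inv_mul_le (by omega) hs_ub hlam_s hlam_tail (hsum _ hs_lb hs_ub) hf_nonneg
      (hf.mono (Set.Icc_subset_Icc_left (by omega))) fun k hk => ?_).trans ?_
    · exact (sum_le_sum_of_subset_of_nonneg (Icc_subset_Icc_left (by omega))
        fun j _ _ => hP j).trans (hf_dom k (mem_Icc.1 hk).2)
    · gcongr
      linarith
  have hlam_pos : ∀ j ∈ Icc (s + 1) m, 0 < lam j := fun j hj =>
    hlam_s.trans_le (hlam_tail ⟨le_rfl, hs_ub⟩ (mem_Icc.1 hj) (mem_Icc.1 hj).1)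
  refine (abs_hsInner_le_sqrt_mul_sqrt_add_sqrt_mul_sqrt horth _ T (by omega) hlam_pos).trans ?_
  rw [hsNorm, hsNorm]
  simp_rw [sq_norm_toEuclideanLin_signMatrix]
  gcongr
  · exact hf_dom s (by omega)
  · exact sum_sq_norm_toEuclideanLin_le_hsInner horth (Icc_subset_Icc_right (by omega)) T
  · rw [← sum_mul_sq_norm_toEuclideanLin_eq_hsInner_sqrt horth hW hWeig hT]
    exact sum_le_sum_of_subset_of_nonneg (Icc_subset_Icc_left (by omega)) fun j hj _ =>
      mul_nonneg (hlam_nonneg j (mem_Icc.1 hj).1 (mem_Icc.1 hj).2) (sq_nonneg _)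

/-- **Deterministic bound on the sign pairing.** Let `φ ∈ Ψ`. Then for every integer `s` with
`k₀−1 ≤ s ≤ m−1` and every symmetric `T`,
`|⟨sign(S_*), T⟩| ≤ √(φ(s)) ‖T‖₂ + √((c+2) φ(s+1)/λ_{s+1}) ‖W^{1/2}T‖₂`. -/
theorem sign_pairing_bound
    (m : ℕ) (hm : 2 ≤ m) (c : ℝ) (hc : 0 < c)
    (lam : ℕ → ℝ) (k0 : ℕ)
    (hlam_nonneg : ∀ k, 1 ≤ k → k ≤ m → 0 ≤ lam k)
    (hlam_mono : ∀ k, 1 ≤ k → k < m → lam k ≤ lam (k + 1))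
    (hk0_mem : 1 ≤ k0 ∧ k0 ≤ m) (hk0_pos : 0 < lam k0)
    (hk0_min : ∀ k, 1 ≤ k → k ≤ m → 0 < lam k → k0 ≤ k)
    (hratio : ∀ k, k0 ≤ k → k < m → ((k : ℝ) + 1) / lam (k + 1) ≤ (k : ℝ) / lam k)
    (hgap : ∀ k, k0 ≤ k → k < m → lam (k + 1) ≤ c * lam k)
    (hsum : ∀ s, k0 ≤ s → s ≤ m → ∑ k ∈ Finset.Icc s m, (lam k)⁻¹ ≤ c * s / lam s)
    (phi : ℕ → EuclideanSpace ℝ (Fin m))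
    (horth : Orthonormal ℝ (fun k : Fin m => phi ((k : ℕ) + 1)))
    (W : Matrix (Fin m) (Fin m) ℝ) (hW : W.PosSemidef)
    (hWeig : ∀ k, 1 ≤ k → k ≤ m → Matrix.toEuclideanLin W (phi k) = lam k • phi k)
    (Sstar : Matrix (Fin m) (Fin m) ℝ) (hSsym : Sstar.IsHermitian)
    (r : ℕ) (hr : Sstar.rank = r) (hr1 : 1 ≤ r)
    (f : ℕ → ℝ)
    (hf_mono : ∀ k, k < m → f k ≤ f (k + 1))
    (hf_ratio : ∀ k, 1 ≤ k → k < m → f (k + 1) / ((k : ℝ) + 1) ≤ f k / k)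
    (hf_dom : ∀ k, k ≤ m → ∑ j ∈ Finset.Icc 1 k, projNormSq (suppS Sstar) (phi j) ≤ f k)
    (s : ℕ) (hs_lb : k0 ≤ s + 1) (hs_ub : s + 1 ≤ m)
    (T : Matrix (Fin m) (Fin m) ℝ) (hT : T.IsHermitian) :
    |hsInner (signMatrix hSsym) T| ≤
      Real.sqrt (f s) * hsNorm T +
        Real.sqrt ((c + 2) * f (s + 1) / lam (s + 1)) * hsNorm (hW.sqrt * T) :=
  sign_pairing_bound_general m c lam k0 hlam_nonneg hlam_mono hk0_mem hk0_pos hsum phi horth W hW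
    hWeig Sstar hSsym f hf_ratio hf_dom s hs_lb hs_ub T hT
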